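/- arXiv:0903.0744 — 7 statements merged into one kernel-verified Lean document; each statement's English description precedes it below -/
import Mathlib

section
/- Let 0 < ε ≤ ε₀ be real numbers. There exist constants 0 < m ≤ M, depending only on ε and ε₀, such that for all real numbers a, a', a'' in the interval [ε/2, ε₀/2] and every real b ≥ 0 satisfying cosh b = (cosh a'' + cosh a · cosh a')/(sinh a · sinh a'), one has m ≤ b ≤ M. -/
open Real

private lemma cosh_le_exp_of_nonneg {x : ℝ} (hx : 0 ≤ x) : Real.cosh x ≤ Real.exp x := by
  rw [Real.cosh_eq]
  have : Real.exp (-x) ≤ Real.exp x := Real.exp_le_exp.2 (by linarith)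
  linarith

private lemma half_exp_le_cosh (x : ℝ) : Real.exp x / 2 ≤ Real.cosh x := by
  rw [Real.cosh_eq]
  have := (Real.exp_pos (-x)).le
  linarith

/-- Case (i) of Lemma 3.3: if the boundary half-lengths `a, a', a''` lie in
`[ε/2, ε₀/2]`, then the perpendicular arc length `b` determined by the
right-angled hexagon relation is bounded above and below by constants
depending only on `ε` and `ε₀`. -/
theorem case_i_bounds (ε ε₀ : ℝ) (hε : 0 < ε) (hεε₀ : ε ≤ ε₀) :
    ∃ m M : ℝ, 0 < m ∧ m ≤ M ∧
      ∀ a a' a'' b : ℝ,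
        a ∈ Set.Icc (ε / 2) (ε₀ / 2) →
        a' ∈ Set.Icc (ε / 2) (ε₀ / 2) →
        a'' ∈ Set.Icc (ε / 2) (ε₀ / 2) →
        0 ≤ b →
        Real.cosh b = (Real.cosh a'' + Real.cosh a * Real.cosh a') /
          (Real.sinh a * Real.sinh a') →
        m ≤ b ∧ b ≤ M := by
  have hε0 : (0:ℝ) < ε₀ := lt_of_lt_of_le hε hεε₀
  obtain ⟨s, hs_def⟩ : ∃ x : ℝ, x = Real.sinh (ε / 2) := ⟨_, rfl⟩
  obtain ⟨s₀, hs₀_def⟩ : ∃ x : ℝ, x = Real.sinh (ε₀ / 2) := ⟨_, rfl⟩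
  obtain ⟨c₀, hc₀_def⟩ : ∃ x : ℝ, x = Real.cosh (ε₀ / 2) := ⟨_, rfl⟩
  have hs : 0 < s := by rw [hs_def]; exact Real.sinh_pos_iff.2 (by linarith)
  have hs₀ : 0 < s₀ := by rw [hs₀_def]; exact Real.sinh_pos_iff.2 (by linarith)
  have hc₀ : 1 ≤ c₀ := by rw [hc₀_def]; exact Real.one_le_cosh _
  obtain ⟨Clow, hClow_def⟩ : ∃ x : ℝ, x = 1 + 2 / s₀ ^ 2 := ⟨_, rfl⟩
  obtain ⟨Cup, hCup_def⟩ : ∃ x : ℝ, x = (c₀ + c₀ ^ 2) / s ^ 2 := ⟨_, rfl⟩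
  have hClow1 : 1 < Clow := by
    have : 0 < 2 / s₀ ^ 2 := by positivity
    rw [hClow_def]; linarith
  have hCup1 : 1 < Cup := by
    have hss : s < c₀ := by
      have h1 : s ≤ s₀ := by rw [hs_def, hs₀_def]; exact Real.sinh_le_sinh.2 (by linarith)
      have h2 : s₀ < c₀ := by rw [hs₀_def, hc₀_def]; exact Real.sinh_lt_cosh _
      linarith
    rw [hCup_def, lt_div_iff₀ (by positivity)]
    nlinarith [hs.le]
  have hCup0 : 0 < Cup := lt_trans one_pos hCup1
  obtain ⟨m, hm_def⟩ : ∃ x : ℝ, x = Real.log Clow := ⟨_, rfl⟩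
  obtain ⟨M, hM_def⟩ : ∃ x : ℝ, x = max (Real.log (2 * Cup)) m := ⟨_, rfl⟩
  have hm0 : 0 < m := by rw [hm_def]; exact Real.log_pos hClow1
  have hmM : m ≤ M := by rw [hM_def]; exact le_max_right _ _
  refine ⟨m, M, hm0, hmM, ?_⟩
  intro a a' a'' b ha ha' ha'' hb hcosh
  obtain ⟨ha1, ha2⟩ := ha
  obtain ⟨ha'1, ha'2⟩ := ha'
  obtain ⟨ha''1, ha''2⟩ := ha''
  have hapos : 0 < a := by linarith
  have ha'pos : 0 < a' := by linarith
  have hsa : 0 < Real.sinh a := Real.sinh_pos_iff.2 hapos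
  have hsa' : 0 < Real.sinh a' := Real.sinh_pos_iff.2 ha'pos
  have hD : 0 < Real.sinh a * Real.sinh a' := mul_pos hsa hsa'
  have hsa_le : Real.sinh a ≤ s₀ := by rw [hs₀_def]; exact Real.sinh_le_sinh.2 ha2
  have hsa'_le : Real.sinh a' ≤ s₀ := by rw [hs₀_def]; exact Real.sinh_le_sinh.2 ha'2
  have hsa_ge : s ≤ Real.sinh a := by rw [hs_def]; exact Real.sinh_le_sinh.2 ha1
  have hsa'_ge : s ≤ Real.sinh a' := by rw [hs_def]; exact Real.sinh_le_sinh.2 ha'1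
  have hca : Real.cosh a ≤ c₀ := by
    rw [hc₀_def]; exact Real.cosh_le_cosh.2 (by
    rw [abs_of_pos hapos, abs_of_pos (by linarith : (0:ℝ) < ε₀/2)]; exact ha2)
  have hca' : Real.cosh a' ≤ c₀ := by
    rw [hc₀_def]; exact Real.cosh_le_cosh.2 (by
    rw [abs_of_pos ha'pos, abs_of_pos (by linarith : (0:ℝ) < ε₀/2)]; exact ha'2)
  have hca'' : Real.cosh a'' ≤ c₀ := by
    rw [hc₀_def]
    exact Real.cosh_le_cosh.2 (by
      rw [abs_of_pos (by linarith : (0:ℝ) < a''), abs_of_pos (by linarith : (0:ℝ) < ε₀/2)]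
      exact ha''2)
  -- lower bound on cosh b
  have hsub : Real.cosh a * Real.cosh a' - Real.sinh a * Real.sinh a' = Real.cosh (a - a') := by
    rw [Real.cosh_sub]
  have hone : (1:ℝ) ≤ Real.cosh (a - a') := Real.one_le_cosh _
  have hnum_lb : Real.sinh a * Real.sinh a' + 2 ≤ Real.cosh a'' + Real.cosh a * Real.cosh a' := by
    have := Real.one_le_cosh a''
    linarith
  have hcoshb_lb : Clow ≤ Real.cosh b := by
    rw [hcosh, le_div_iff₀ hD, hClow_def]
    have hDD : Real.sinh a * Real.sinh a' ≤ s₀ ^ 2 := by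
      rw [sq]; exact mul_le_mul hsa_le hsa'_le hsa'.le hs₀.le
    have h2 : 2 / s₀ ^ 2 * (Real.sinh a * Real.sinh a') ≤ 2 := by
      rw [div_mul_eq_mul_div, div_le_iff₀ (by positivity)]
      linarith
    have hexp : (1 + 2 / s₀ ^ 2) * (Real.sinh a * Real.sinh a')
        = Real.sinh a * Real.sinh a' + 2 / s₀ ^ 2 * (Real.sinh a * Real.sinh a') := by ring
    rw [hexp]
    linarith
  have hcoshb_ub : Real.cosh b ≤ Cup := by
    rw [hcosh, hCup_def, div_le_div_iff₀ hD (by positivity)]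
    have hDD : s ^ 2 ≤ Real.sinh a * Real.sinh a' := by
      rw [sq]; exact mul_le_mul hsa_ge hsa'_ge hs.le hsa.le
    have e1 : Real.cosh a * Real.cosh a' ≤ c₀ ^ 2 := by
      rw [sq]; exact mul_le_mul hca hca' (le_of_lt (Real.cosh_pos _)) (by linarith)
    have e2 : Real.cosh a'' + Real.cosh a * Real.cosh a' ≤ c₀ + c₀ ^ 2 :=
      add_le_add hca'' e1
    exact mul_le_mul e2 hDD (by positivity) (by positivity)
  constructor
  · -- m ≤ b
    have h1 : Real.cosh m ≤ Real.cosh b := by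
      have := cosh_le_exp_of_nonneg hm0.le
      rw [hm_def] at this ⊢
      rw [Real.exp_log (by linarith : (0:ℝ) < Clow)] at this
      exact le_trans this hcoshb_lb
    have := Real.cosh_le_cosh.1 h1
    rwa [abs_of_pos hm0, abs_of_nonneg hb] at this
  · -- b ≤ M
    have hlog : Real.cosh b ≤ Real.cosh (Real.log (2 * Cup)) := by
      have h1 : Real.exp (Real.log (2 * Cup)) / 2 ≤ Real.cosh (Real.log (2 * Cup)) :=
        half_exp_le_cosh _
      rw [Real.exp_log (by positivity)] at h1
      have : (2 * Cup) / 2 = Cup := by ring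
      rw [this] at h1
      exact le_trans hcoshb_ub h1
    have hM' : Real.cosh b ≤ Real.cosh M := by
      refine le_trans hlog (Real.cosh_le_cosh.2 ?_)
      have hlogpos : 0 < Real.log (2 * Cup) := Real.log_pos (by linarith)
      have hMpos : 0 < M := lt_of_lt_of_le hm0 hmM
      rw [abs_of_pos hlogpos, abs_of_pos hMpos]
      rw [hM_def]; exact le_max_left _ _
    have := Real.cosh_le_cosh.1 hM'
    have hMpos : 0 < M := lt_of_lt_of_le hm0 hmM
    rwa [abs_of_nonneg hb, abs_of_pos hMpos] at this
end

section
/- For all positive real numbers a, a', a'' and every real d ≥ 0 satisfying cosh d = (cosh a + cosh a' · cosh a'')/(sinh a' · sinh a''), one has sinh a' · sinh d > 1. -/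
/-- The analytic fact behind Case (ii) of Lemma 3.3: if `d ≥ 0` satisfies the
right-angled hexagon relation determined by positive `a, a', a''`, then
`sinh a' * sinh d > 1`. -/
theorem case_ii_positivity (a a' a'' d : ℝ) (ha : 0 < a) (ha' : 0 < a') (ha'' : 0 < a'')
    (hd : 0 ≤ d)
    (hcosh : Real.cosh d = (Real.cosh a + Real.cosh a' * Real.cosh a'') /
      (Real.sinh a' * Real.sinh a'')) :
    Real.sinh a' * Real.sinh d > 1 := by
  have hs' : 0 < Real.sinh a' := Real.sinh_pos_iff.mpr ha'
  have hs'' : 0 < Real.sinh a'' := Real.sinh_pos_iff.mpr ha''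
  have hsd : 0 ≤ Real.sinh d := Real.sinh_nonneg_iff.mpr hd
  have hca : 0 < Real.cosh a := Real.cosh_pos _
  have h1 : Real.cosh d * (Real.sinh a' * Real.sinh a'') =
      Real.cosh a + Real.cosh a' * Real.cosh a'' := by
    field_simp at hcosh
    linarith [hcosh]
  have h2 : Real.cosh d ^ 2 = Real.sinh d ^ 2 + 1 := Real.cosh_sq d
  have h3 : Real.cosh a' ^ 2 = Real.sinh a' ^ 2 + 1 := Real.cosh_sq a'
  have h4 : Real.cosh a'' ^ 2 = Real.sinh a'' ^ 2 + 1 := Real.cosh_sq a''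
  have hca' : 0 < Real.cosh a' := Real.cosh_pos _
  have hca'' : 0 < Real.cosh a'' := Real.cosh_pos _
  have hcd : 0 < Real.cosh d := Real.cosh_pos _
  have hkey : Real.cosh d * (Real.sinh a' * Real.sinh a'') >
      Real.cosh a' * Real.cosh a'' := by nlinarith
  have hkey2 : (Real.cosh a' * Real.cosh a'') ^ 2 <
      (Real.cosh d * (Real.sinh a' * Real.sinh a'')) ^ 2 := by
    nlinarith [mul_self_lt_mul_self (mul_pos hca' hca'').le hkey]
  have e1 : (Real.sinh a' ^ 2 + 1) * (Real.sinh a'' ^ 2 + 1) <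
      (Real.sinh d ^ 2 + 1) * (Real.sinh a' ^ 2 * Real.sinh a'' ^ 2) := by
    calc (Real.sinh a' ^ 2 + 1) * (Real.sinh a'' ^ 2 + 1)
        = (Real.cosh a' * Real.cosh a'') ^ 2 := by rw [mul_pow, h3, h4]
      _ < (Real.cosh d * (Real.sinh a' * Real.sinh a'')) ^ 2 := hkey2
      _ = (Real.sinh d ^ 2 + 1) * (Real.sinh a' ^ 2 * Real.sinh a'' ^ 2) := by
          rw [mul_pow, h2, mul_pow]
  have hsq : (Real.sinh a' * Real.sinh d) ^ 2 * Real.sinh a'' ^ 2 > Real.sinh a'' ^ 2 := by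
    nlinarith [e1, sq_nonneg (Real.sinh a')]
  have hsq2 : (Real.sinh a' * Real.sinh d) ^ 2 > 1 := by
    have := sq_nonneg (Real.sinh a'')
    nlinarith [sq_nonneg (Real.sinh a'')]
  nlinarith [mul_nonneg hs'.le hsd]
end

section
/- Let 0 < ε ≤ ε₀ be real numbers. There exist constants 0 < m ≤ M, depending only on ε and ε₀, such that for all real numbers a, a', a'' in [ε/2, ε₀/2], every real d ≥ 0 satisfying cosh d = (cosh a + cosh a' · cosh a'')/(sinh a' · sinh a''), and every real b ≥ 0 satisfying cosh b = sinh a' · sinh d, one has m ≤ b ≤ M. -/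
/-!
Put `p = cosh a`, `q = cosh a'`, `r = cosh a''`, `u = sinh a'`, `v = sinh a''`. Eliminating `d`
from the pentagon and hexagon relations gives the identity
`(sinh b · v)² = (p + q r)² - (q v)² = (p + q e^{a''}) (p + q e^{-a''})`.
Both factors are at least `1`, so `1 / v ≤ sinh b ≤ (p + q r) / v`, and the constraints on the
half-lengths turn this into bounds on `sinh b` that depend only on `ε` and `ε₀`.
-/

open Real

section PantsRelations

variable {a a' a'' d b : ℝ}

theorem sq_sinh_mul_sinh_eq (hd : cosh d * (sinh a' * sinh a'') = cosh a + cosh a' * cosh a'')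
    (hb : cosh b = sinh a' * sinh d) :
    (sinh b * sinh a'') ^ 2 =
      (cosh a + cosh a' * cosh a'') ^ 2 - (cosh a' * sinh a'') ^ 2 := by
  rw [← hd]
  linear_combination sinh a'' ^ 2 * sinh_sq b - (sinh a' * sinh a'') ^ 2 * cosh_sq d
    + sinh a'' ^ 2 * cosh_sq a' + sinh a'' ^ 2 * (cosh b + sinh a' * sinh d) * hb

theorem one_le_sq_sinh_mul_sinh (hd : cosh d * (sinh a' * sinh a'') = cosh a + cosh a' * cosh a'')
    (hb : cosh b = sinh a' * sinh d) :
    1 ≤ (sinh b * sinh a'') ^ 2 := by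
  have hfactor : (cosh a + cosh a' * cosh a'') ^ 2 - (cosh a' * sinh a'') ^ 2 =
      (cosh a + cosh a' * exp a'') * (cosh a + cosh a' * exp (-a'')) := by
    rw [← cosh_add_sinh, ← cosh_sub_sinh]
    ring
  rw [sq_sinh_mul_sinh_eq hd hb, hfactor]
  exact one_le_mul_of_one_le_of_one_le
    (le_add_of_le_of_nonneg (one_le_cosh a) (by positivity))
    (le_add_of_le_of_nonneg (one_le_cosh a) (by positivity))

theorem sinh_mem_Icc_of_pants (hb0 : 0 ≤ b) (ha'' : 0 < a'')
    (hd : cosh d * (sinh a' * sinh a'') = cosh a + cosh a' * cosh a'')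
    (hb : cosh b = sinh a' * sinh d) :
    sinh b ∈ Set.Icc (1 / sinh a'') ((cosh a + cosh a' * cosh a'') / sinh a'') := by
  have hv : 0 < sinh a'' := sinh_pos_iff.2 ha''
  have hx : 0 ≤ sinh b * sinh a'' := mul_nonneg (sinh_nonneg_iff.2 hb0) hv.le
  have hlower : 1 ≤ sinh b * sinh a'' := by
    simpa [abs_of_nonneg hx] using (one_le_sq_iff_one_le_abs _).1 (one_le_sq_sinh_mul_sinh hd hb)
  have hupper : sinh b * sinh a'' ≤ cosh a + cosh a' * cosh a'' := by
    refine (pow_le_pow_iff_left₀ hx (by positivity) two_ne_zero).1 ?_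
    rw [sq_sinh_mul_sinh_eq hd hb]
    exact sub_le_self _ (sq_nonneg _)
  exact ⟨(div_le_iff₀ hv).2 (by linarith), (le_div_iff₀ hv).2 hupper⟩

end PantsRelations

theorem cosh_le_cosh_of_mem_Icc {x l h : ℝ} (hl : 0 ≤ l) (hx : x ∈ Set.Icc l h) :
    cosh x ≤ cosh h :=
  cosh_strictMonoOn.monotoneOn (hl.trans hx.1) (hl.trans (hx.1.trans hx.2)) hx.2

/-- Case (ii) of Lemma 3.3: in a hyperbolic pair of pants with boundary
half-lengths `a, a', a''` in `[ε/2, ε₀/2]`, the half-length `b` of the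
perpendicular arc returning to one boundary component is bounded above and
below by constants depending only on `ε` and `ε₀`. -/
theorem case_ii_bounds (ε ε₀ : ℝ) (hε : 0 < ε) (hεε₀ : ε ≤ ε₀) :
    ∃ m M : ℝ, 0 < m ∧ m ≤ M ∧
      ∀ a a' a'' d b : ℝ,
        a ∈ Set.Icc (ε / 2) (ε₀ / 2) →
        a' ∈ Set.Icc (ε / 2) (ε₀ / 2) →
        a'' ∈ Set.Icc (ε / 2) (ε₀ / 2) →
        0 ≤ d →
        Real.cosh d = (Real.cosh a + Real.cosh a' * Real.cosh a'') /
          (Real.sinh a' * Real.sinh a'') →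
        0 ≤ b →
        Real.cosh b = Real.sinh a' * Real.sinh d →
        m ≤ b ∧ b ≤ M := by
  have hs : 0 < sinh (ε / 2) := sinh_pos_iff.2 (by positivity)
  have hss₀ : sinh (ε / 2) ≤ sinh (ε₀ / 2) := sinh_le_sinh.2 (by linarith)
  have hs₀ : 0 < sinh (ε₀ / 2) := hs.trans_le hss₀
  have hc₀ : 1 ≤ cosh (ε₀ / 2) := one_le_cosh _
  refine ⟨arsinh (1 / sinh (ε₀ / 2)), arsinh ((cosh (ε₀ / 2) + cosh (ε₀ / 2) ^ 2) / sinh (ε / 2)),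
    arsinh_pos_iff.2 (by positivity), arsinh_le_arsinh.2 ?_, ?_⟩
  · calc 1 / sinh (ε₀ / 2) ≤ 1 / sinh (ε / 2) := one_div_le_one_div_of_le hs hss₀
      _ ≤ _ := div_le_div_of_nonneg_right (by nlinarith) hs.le
  intro a a' a'' d b ha ha' ha'' _ hd hb0 hb
  have hl : 0 ≤ ε / 2 := by positivity
  have hu : 0 < sinh a' := hs.trans_le (sinh_le_sinh.2 ha'.1)
  have hv : 0 < sinh a'' := hs.trans_le (sinh_le_sinh.2 ha''.1)
  obtain ⟨hlower, hupper⟩ :=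
    sinh_mem_Icc_of_pants hb0 (sinh_pos_iff.1 hv) ((eq_div_iff (mul_pos hu hv).ne').1 hd) hb
  rw [← arsinh_sinh b, arsinh_le_arsinh, arsinh_le_arsinh]
  constructor
  · exact (one_div_le_one_div_of_le hv (sinh_le_sinh.2 ha''.2)).trans hlower
  · refine hupper.trans (div_le_div₀ (by positivity) ?_ hs (sinh_le_sinh.2 ha''.1))
    calc cosh a + cosh a' * cosh a''
        ≤ cosh (ε₀ / 2) + cosh (ε₀ / 2) * cosh (ε₀ / 2) :=
          add_le_add (cosh_le_cosh_of_mem_Icc hl ha) (mul_le_mul (cosh_le_cosh_of_mem_Icc hl ha')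
            (cosh_le_cosh_of_mem_Icc hl ha'') (cosh_pos _).le (by positivity))
      _ = cosh (ε₀ / 2) + cosh (ε₀ / 2) ^ 2 := by ring
end

section
/- Let 0 < ε ≤ ε₀ be real numbers. There exists a constant K > 0, depending only on ε and ε₀, such that for all real numbers a, a' in [ε/2, ε₀/2], every real c ≥ ε/2 and every real b ≥ 0 satisfying cosh c + cosh a · cosh a' = sinh a · sinh a' · cosh b, one has |c − b| ≤ K. -/
/-- Key estimate of Case 1 in the proof of Lemma 3.3: there is `K > 0`
depending only on `ε, ε₀` such that the hexagon relation
`cosh c + cosh a * cosh a' = sinh a * sinh a' * cosh b`, with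
`a, a' ∈ [ε/2, ε₀/2]`, `c ≥ ε/2` and `b ≥ 0`, implies `|c - b| ≤ K`. -/
theorem case1_additive_estimate (ε ε₀ : ℝ) (hε : 0 < ε) (hεε₀ : ε ≤ ε₀) :
    ∃ K : ℝ, 0 < K ∧
      ∀ a a' c b : ℝ,
        a ∈ Set.Icc (ε / 2) (ε₀ / 2) →
        a' ∈ Set.Icc (ε / 2) (ε₀ / 2) →
        ε / 2 ≤ c → 0 ≤ b →
        Real.cosh c + Real.cosh a * Real.cosh a' =
          Real.sinh a * Real.sinh a' * Real.cosh b →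
        |c - b| ≤ K := by
  have hε2 : 0 < ε / 2 := by linarith
  have hε₀2 : 0 < ε₀ / 2 := by linarith
  have hsm : 0 < Real.sinh (ε / 2) := Real.sinh_pos_iff.mpr hε2
  have hsM : 0 < Real.sinh (ε₀ / 2) := Real.sinh_pos_iff.mpr hε₀2
  set m : ℝ := Real.sinh (ε / 2) ^ 2 with hm_def
  set M : ℝ := Real.sinh (ε₀ / 2) ^ 2 with hM_def
  set C : ℝ := Real.cosh (ε₀ / 2) ^ 2 with hC_def
  have hmpos : 0 < m := by positivity
  have hMpos : 0 < M := by positivity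
  have hCpos : 0 < C := by positivity
  refine ⟨|Real.log (2 * (1 + C) / m)| + |Real.log (2 * M)| + 1, by positivity, ?_⟩
  rintro a a' c b ⟨ha1, ha2⟩ ⟨ha'1, ha'2⟩ hc hb hex
  have hapos : 0 < a := lt_of_lt_of_le hε2 ha1
  have ha'pos : 0 < a' := lt_of_lt_of_le hε2 ha'1
  have hcpos : 0 < c := lt_of_lt_of_le hε2 hc
  have hsa : Real.sinh (ε / 2) ≤ Real.sinh a := Real.sinh_le_sinh.mpr ha1
  have hsa' : Real.sinh (ε / 2) ≤ Real.sinh a' := Real.sinh_le_sinh.mpr ha'1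
  have hsaM : Real.sinh a ≤ Real.sinh (ε₀ / 2) := Real.sinh_le_sinh.mpr ha2
  have hsa'M : Real.sinh a' ≤ Real.sinh (ε₀ / 2) := Real.sinh_le_sinh.mpr ha'2
  have hca : Real.cosh a ≤ Real.cosh (ε₀ / 2) := by
    rw [Real.cosh_le_cosh, abs_of_pos hapos, abs_of_pos hε₀2]; exact ha2
  have hca' : Real.cosh a' ≤ Real.cosh (ε₀ / 2) := by
    rw [Real.cosh_le_cosh, abs_of_pos ha'pos, abs_of_pos hε₀2]; exact ha'2
  have hcapos : 0 < Real.cosh a := Real.cosh_pos a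
  have hca'pos : 0 < Real.cosh a' := Real.cosh_pos a'
  -- product bounds
  have hprod_lo : m ≤ Real.sinh a * Real.sinh a' := by
    rw [hm_def, sq]
    exact mul_le_mul hsa hsa' hsm.le (le_trans hsm.le hsa)
  have hprod_hi : Real.sinh a * Real.sinh a' ≤ M := by
    rw [hM_def, sq]
    exact mul_le_mul hsaM hsa'M (le_trans hsm.le hsa') hsM.le
  have hcprod : Real.cosh a * Real.cosh a' ≤ C := by
    rw [hC_def, sq]
    exact mul_le_mul hca hca' hca'pos.le (Real.cosh_pos _).le
  have hcoshc1 : 1 ≤ Real.cosh c := Real.one_le_cosh c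
  have hcoshb1 : 1 ≤ Real.cosh b := Real.one_le_cosh b
  -- exp vs cosh
  have hexp_le_twocosh : ∀ x : ℝ, Real.exp x ≤ 2 * Real.cosh x := by
    intro x
    rw [Real.cosh_eq]
    have := (Real.exp_pos (-x)).le
    linarith
  have hcosh_le_exp : ∀ x : ℝ, 0 ≤ x → Real.cosh x ≤ Real.exp x := by
    intro x hx
    rw [Real.cosh_eq]
    have h1 : Real.exp (-x) ≤ Real.exp x := Real.exp_le_exp.mpr (by linarith)
    linarith
  -- Upper bound on cosh b
  have hub : Real.cosh b ≤ Real.cosh c * ((1 + C) / m) := by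
    have h1 : Real.sinh a * Real.sinh a' * Real.cosh b ≤ Real.cosh c * (1 + C) := by
      rw [← hex]
      nlinarith
    have h2 : m * Real.cosh b ≤ Real.cosh c * (1 + C) := by
      calc m * Real.cosh b ≤ Real.sinh a * Real.sinh a' * Real.cosh b :=
            mul_le_mul_of_nonneg_right hprod_lo (by linarith)
        _ ≤ Real.cosh c * (1 + C) := h1
    rw [mul_div_assoc']
    rw [le_div_iff₀ hmpos]
    linarith [h2]
  -- Lower bound: cosh c ≤ M * cosh b
  have hlb : Real.cosh c ≤ M * Real.cosh b := by
    have h1 : Real.cosh c ≤ Real.sinh a * Real.sinh a' * Real.cosh b := by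
      rw [← hex]; nlinarith
    calc Real.cosh c ≤ Real.sinh a * Real.sinh a' * Real.cosh b := h1
      _ ≤ M * Real.cosh b := mul_le_mul_of_nonneg_right hprod_hi (by linarith)
  -- b ≤ c + log(2(1+C)/m)
  have hbc : b ≤ c + Real.log (2 * (1 + C) / m) := by
    have h1 : Real.exp b ≤ 2 * (1 + C) / m * Real.exp c := by
      calc Real.exp b ≤ 2 * Real.cosh b := hexp_le_twocosh b
        _ ≤ 2 * (Real.cosh c * ((1 + C) / m)) := by linarith
        _ ≤ 2 * (Real.exp c * ((1 + C) / m)) := by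
            have h := hcosh_le_exp c hcpos.le
            have hpos : (0:ℝ) ≤ (1 + C) / m := by positivity
            have := mul_le_mul_of_nonneg_right h hpos
            linarith
        _ = 2 * (1 + C) / m * Real.exp c := by ring
    have h2 := Real.log_le_log (Real.exp_pos b) h1
    rw [Real.log_exp, Real.log_mul (by positivity) (Real.exp_ne_zero c),
      Real.log_exp] at h2
    linarith
  -- c ≤ b + log(2M)
  have hcb : c ≤ b + Real.log (2 * M) := by
    have h1 : Real.exp c ≤ 2 * M * Real.exp b := by
      calc Real.exp c ≤ 2 * Real.cosh c := hexp_le_twocosh c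
        _ ≤ 2 * (M * Real.cosh b) := by linarith
        _ ≤ 2 * (M * Real.exp b) := by
            have h := hcosh_le_exp b hb
            have := mul_le_mul_of_nonneg_left h hMpos.le
            linarith
        _ = 2 * M * Real.exp b := by ring
    have h2 := Real.log_le_log (Real.exp_pos c) h1
    rw [Real.log_exp, Real.log_mul (by positivity) (Real.exp_ne_zero b),
      Real.log_exp] at h2
    linarith
  rw [abs_sub_le_iff]
  constructor
  · have := le_abs_self (Real.log (2 * M))
    have := abs_nonneg (Real.log (2 * (1 + C) / m))
    linarith
  · have := le_abs_self (Real.log (2 * (1 + C) / m))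
    have := abs_nonneg (Real.log (2 * M))
    linarith
end

section
/- Let 0 < ε ≤ ε₀ be real numbers. There exists a constant C ≥ 1, depending only on ε and ε₀, such that for all real numbers a, a' in [ε/2, ε₀/2], every real c ≥ ε/2 and every real b ≥ 0 satisfying cosh c + cosh a · cosh a' = sinh a · sinh a' · cosh b, one has (2c)/C ≤ b ≤ C · (2c). -/
set_option maxHeartbeats 1000000


/-- Conclusion of Case 1 of Lemma 3.3: there is `C ≥ 1` depending only on
`ε, ε₀` such that the hexagon relation implies that `b` and `2c` are
comparable: `(2c)/C ≤ b ≤ C * (2c)`. -/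
theorem case1_multiplicative_estimate (ε ε₀ : ℝ) (hε : 0 < ε) (hεε₀ : ε ≤ ε₀) :
    ∃ C : ℝ, 1 ≤ C ∧
      ∀ a a' c b : ℝ,
        a ∈ Set.Icc (ε / 2) (ε₀ / 2) →
        a' ∈ Set.Icc (ε / 2) (ε₀ / 2) →
        ε / 2 ≤ c → 0 ≤ b →
        Real.cosh c + Real.cosh a * Real.cosh a' =
          Real.sinh a * Real.sinh a' * Real.cosh b →
        (2 * c) / C ≤ b ∧ b ≤ C * (2 * c) := by
  have hε2 : 0 < ε / 2 := by linarith (config := { oracle := .fourierMotzkin })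
  set s := Real.sinh (ε / 2) with hs_def
  have hs : 0 < s := Real.sinh_pos_iff.mpr hε2
  set S := Real.sinh (ε₀ / 2) with hS_def
  have hS : 0 < S := Real.sinh_pos_iff.mpr (by linarith (config := { oracle := .fourierMotzkin }))
  set M := Real.cosh (ε₀ / 2) with hM_def
  have hM : 1 ≤ M := Real.one_le_cosh _
  set X : ℝ := 2 * (1 + M * M) / (s * s) with hXdef
  have hX : 0 < X := by positivity
  set L₁ : ℝ := max (Real.log X) 0 with hL₁def
  have hL₁ : 0 ≤ L₁ := le_max_right _ _
  set L₂ : ℝ := max (Real.log (2 * (S * S))) 1 with hL₂def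
  have hL₂ : 1 ≤ L₂ := le_max_right _ _
  set b₀ : ℝ := Real.log (1 + 2 / (S * S)) with hb₀def
  have hSS0 : (0:ℝ) < 2 / (S * S) := by positivity
  have hb₀ : 0 < b₀ := Real.log_pos (by linarith (config := { oracle := .fourierMotzkin }))
  set C : ℝ := max 4 (max (4 * L₂ / b₀) (1 + 2 * L₁ / ε)) with hCdef
  have hC4 : (4 : ℝ) ≤ C := le_max_left _ _
  have hC1 : (1 : ℝ) ≤ C := by linarith (config := { oracle := .fourierMotzkin })
  have hCpos : (0 : ℝ) < C := by linarith (config := { oracle := .fourierMotzkin })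
  have hCL : 4 * L₂ / b₀ ≤ C := le_trans (le_max_left _ _) (le_max_right _ _)
  have hCU : 1 + 2 * L₁ / ε ≤ C := le_trans (le_max_right _ _) (le_max_right _ _)
  refine ⟨C, hC1, ?_⟩
  intro a a' c b ha ha' hc hb heq
  obtain ⟨ha1, ha2⟩ := ha
  obtain ⟨ha1', ha2'⟩ := ha'
  have hc0 : 0 < c := lt_of_lt_of_le hε2 hc
  -- bounds on sinh and cosh at a, a'
  have hsa : s ≤ Real.sinh a := Real.sinh_le_sinh.mpr ha1
  have hsa' : s ≤ Real.sinh a' := Real.sinh_le_sinh.mpr ha1'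
  have hSa : Real.sinh a ≤ S := Real.sinh_le_sinh.mpr ha2
  have hSa' : Real.sinh a' ≤ S := Real.sinh_le_sinh.mpr ha2'
  have hMa : Real.cosh a ≤ M := by
    apply Real.cosh_le_cosh.mpr
    rw [abs_of_nonneg (by linarith (config := { oracle := .fourierMotzkin }) : (0:ℝ) ≤ a), abs_of_nonneg (by linarith (config := { oracle := .fourierMotzkin }) : (0:ℝ) ≤ ε₀ / 2)]
    exact ha2
  have hMa' : Real.cosh a' ≤ M := by
    apply Real.cosh_le_cosh.mpr
    rw [abs_of_nonneg (by linarith (config := { oracle := .fourierMotzkin }) : (0:ℝ) ≤ a'), abs_of_nonneg (by linarith (config := { oracle := .fourierMotzkin }) : (0:ℝ) ≤ ε₀ / 2)]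
    exact ha2'
  have hcb1 : 1 ≤ Real.cosh b := Real.one_le_cosh b
  have hcc1 : 1 ≤ Real.cosh c := Real.one_le_cosh c
  have hca1 : 1 ≤ Real.cosh a := Real.one_le_cosh a
  have hca1' : 1 ≤ Real.cosh a' := Real.one_le_cosh a'
  -- exp bounds for cosh
  have hcoshb_le : Real.cosh b ≤ Real.exp b := by
    rw [Real.cosh_eq]
    have := Real.exp_le_exp.mpr (neg_le_self hb)
    linarith (config := { oracle := .fourierMotzkin })
  have hcoshc_le : Real.cosh c ≤ Real.exp c := by
    rw [Real.cosh_eq]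
    have := Real.exp_le_exp.mpr (neg_le_self hc0.le)
    linarith (config := { oracle := .fourierMotzkin })
  have hcoshb_ge : Real.exp b / 2 ≤ Real.cosh b := by
    rw [Real.cosh_eq]
    have := (Real.exp_pos (-b)).le
    linarith (config := { oracle := .fourierMotzkin })
  have hcoshc_ge : Real.exp c / 2 ≤ Real.cosh c := by
    rw [Real.cosh_eq]
    have := (Real.exp_pos (-c)).le
    linarith (config := { oracle := .fourierMotzkin })
  constructor
  · -- lower bound: 2c / C ≤ b
    -- (i) b ≥ c - L₂
    have hSSb : Real.sinh a * Real.sinh a' ≤ S * S :=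
      mul_le_mul hSa hSa' (le_trans hs.le hsa') hS.le
    have hone : (1:ℝ) ≤ Real.cosh a * Real.cosh a' := by
      have := mul_le_mul hca1 hca1' zero_le_one (by linarith (config := { oracle := .fourierMotzkin }) : (0:ℝ) ≤ Real.cosh a)
      linarith (config := { oracle := .fourierMotzkin })
    have key2 : Real.cosh c ≤ S * S * Real.cosh b := by
      have h2 : Real.sinh a * Real.sinh a' * Real.cosh b ≤ S * S * Real.cosh b :=
        mul_le_mul_of_nonneg_right hSSb (by linarith (config := { oracle := .fourierMotzkin }))
      linarith (config := { oracle := .fourierMotzkin })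
    have hblow : c - L₂ ≤ b := by
      have h1 : Real.exp c ≤ 2 * (S * S) * Real.exp b := by
        have u := mul_le_mul_of_nonneg_left hcoshb_le (by positivity : (0:ℝ) ≤ S * S)
        linarith (config := { oracle := .fourierMotzkin })
      have h2 : Real.exp c ≤ Real.exp (Real.log (2 * (S * S)) + b) := by
        rw [Real.exp_add, Real.exp_log (by positivity)]
        exact h1
      have := Real.exp_le_exp.mp h2
      have : c ≤ Real.log (2 * (S * S)) + b := this
      have hlog : Real.log (2 * (S * S)) ≤ L₂ := le_max_left _ _
      linarith (config := { oracle := .fourierMotzkin })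
    -- (ii) b ≥ b₀
    have key3 : 1 + 2 / (S * S) ≤ Real.cosh b := by
      have hsub : 1 ≤ Real.cosh a * Real.cosh a' - Real.sinh a * Real.sinh a' := by
        rw [← Real.cosh_sub]; exact Real.one_le_cosh _
      have hexpand : Real.sinh a * Real.sinh a' * (Real.cosh b - 1) =
          Real.sinh a * Real.sinh a' * Real.cosh b - Real.sinh a * Real.sinh a' := by ring
      have hmul : Real.sinh a * Real.sinh a' * (Real.cosh b - 1) ≥ 2 := by linarith (config := { oracle := .fourierMotzkin })
      have h2 : 2 ≤ S * S * (Real.cosh b - 1) := by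
        have := mul_le_mul_of_nonneg_right hSSb (by linarith (config := { oracle := .fourierMotzkin }) : (0:ℝ) ≤ Real.cosh b - 1)
        linarith (config := { oracle := .fourierMotzkin })
      have hSS0 : (0:ℝ) < S * S := by positivity
      have : 2 / (S * S) ≤ Real.cosh b - 1 := by
        rw [div_le_iff₀ hSS0]; linarith (config := { oracle := .fourierMotzkin }) [h2]
      linarith (config := { oracle := .fourierMotzkin })
    have hbb₀ : b₀ ≤ b := by
      have h1 : 1 + 2 / (S * S) ≤ Real.exp b := le_trans key3 hcoshb_le
      have := Real.log_le_log (by positivity) h1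
      rwa [Real.log_exp] at this
    -- combine
    rw [div_le_iff₀ hCpos]
    by_cases hcase : 2 * L₂ ≤ c
    · have h1 : c / 2 ≤ b := by linarith (config := { oracle := .fourierMotzkin })
      have h2 : 4 * b ≤ C * b := mul_le_mul_of_nonneg_right hC4 hb
      linarith (config := { oracle := .fourierMotzkin })
    · push_neg at hcase
      have h1 : 4 * L₂ ≤ C * b₀ := by
        rw [div_le_iff₀ hb₀] at hCL
        linarith (config := { oracle := .fourierMotzkin })
      have h2 : C * b₀ ≤ C * b := mul_le_mul_of_nonneg_left hbb₀ hCpos.le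
      linarith (config := { oracle := .fourierMotzkin })
  · -- upper bound: b ≤ C * (2c)
    have key1 : s * s * Real.cosh b ≤ (1 + M * M) * Real.cosh c := by
      have hss : s * s ≤ Real.sinh a * Real.sinh a' :=
        mul_le_mul hsa hsa' hs.le (by linarith (config := { oracle := .fourierMotzkin }))
      have hMM : Real.cosh a * Real.cosh a' ≤ M * M :=
        mul_le_mul hMa hMa' (by linarith (config := { oracle := .fourierMotzkin })) (by linarith (config := { oracle := .fourierMotzkin }))
      have t1 : s * s * Real.cosh b ≤ Real.sinh a * Real.sinh a' * Real.cosh b :=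
        mul_le_mul_of_nonneg_right hss (by linarith (config := { oracle := .fourierMotzkin }))
      have t3 : M * M ≤ M * M * Real.cosh c :=
        le_mul_of_one_le_right (by positivity) hcc1
      have hexp : (1 + M * M) * Real.cosh c = Real.cosh c + M * M * Real.cosh c := by ring
      linarith (config := { oracle := .fourierMotzkin })
    have hbup : b ≤ c + L₁ := by
      have h1 : Real.exp b ≤ X * Real.exp c := by
        have hss0 : (0:ℝ) < s * s := by positivity
        rw [hXdef, div_mul_eq_mul_div, le_div_iff₀ hss0]
        have u1 := mul_le_mul_of_nonneg_left hcoshb_ge (by positivity : (0:ℝ) ≤ s * s)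
        have u2 := mul_le_mul_of_nonneg_left hcoshc_le
          (by positivity : (0:ℝ) ≤ 2 * (1 + M * M))
        linarith (config := { oracle := .fourierMotzkin }) [key1, u1, u2]
      have h2 : Real.exp b ≤ Real.exp (Real.log X + c) := by
        rw [Real.exp_add, Real.exp_log hX]
        exact h1
      have h3 : b ≤ Real.log X + c := Real.exp_le_exp.mp h2
      have hlog : Real.log X ≤ L₁ := le_max_left _ _
      linarith (config := { oracle := .fourierMotzkin })
    have hLc : L₁ ≤ 2 * L₁ / ε * c := by
      rw [div_mul_eq_mul_div, le_div_iff₀ hε]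
      have := mul_le_mul_of_nonneg_left (show ε ≤ 2 * c by linarith (config := { oracle := .fourierMotzkin })) hL₁
      linarith (config := { oracle := .fourierMotzkin })
    have hexp2 : (1 + 2 * L₁ / ε) * c = c + 2 * L₁ / ε * c := by ring
    have hmain : b ≤ (1 + 2 * L₁ / ε) * c := by linarith (config := { oracle := .fourierMotzkin })
    have h1 : (1 + 2 * L₁ / ε) * c ≤ C * c := mul_le_mul_of_nonneg_right hCU hc0.le
    have h2 : C * c ≤ C * (2 * c) :=
      mul_le_mul_of_nonneg_left (by linarith (config := { oracle := .fourierMotzkin }) : c ≤ 2 * c) hCpos.le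
    linarith (config := { oracle := .fourierMotzkin })
end

section
/- Let 0 < ε ≤ ε₀ be real numbers. There exists a constant K > 0, depending only on ε and ε₀, such that for every real a in [ε/4, ε₀/2], every real c ≥ ε/2 and every real b ≥ 0 satisfying cosh c = sinh b · sinh a, one has |c − b| ≤ K. -/
/-- Key estimate of Case 2 in the proof of Lemma 3.3: there is `K > 0`
depending only on `ε, ε₀` such that for `a ∈ [ε/4, ε₀/2]`, `c ≥ ε/2`, `b ≥ 0`
with `cosh c = sinh b * sinh a`, one has `|c - b| ≤ K`. -/
theorem case2_additive_estimate (ε ε₀ : ℝ) (hε : 0 < ε) (hεε₀ : ε ≤ ε₀) :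
    ∃ K : ℝ, 0 < K ∧
      ∀ a c b : ℝ,
        a ∈ Set.Icc (ε / 4) (ε₀ / 2) →
        ε / 2 ≤ c → 0 ≤ b →
        Real.cosh c = Real.sinh b * Real.sinh a →
        |c - b| ≤ K := by
  set s₁ := Real.sinh (ε / 4) with hs₁def
  set s₂ := Real.sinh (ε₀ / 2) with hs₂def
  have hs₁ : 0 < s₁ := Real.sinh_pos_iff.2 (by linarith)
  have hs₂ : 0 < s₂ := Real.sinh_pos_iff.2 (by linarith)
  set M : ℝ := 1 + 2 / s₁ + s₂ with hMdef
  have hM : 1 ≤ M := by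
    have : 0 < 2 / s₁ := by positivity
    simp only [hMdef]; linarith
  refine ⟨Real.log M + 1, by have := Real.log_nonneg hM; linarith, ?_⟩
  intro a c b ha hc hb heq
  have hc0 : 0 < c := by linarith
  have hsa1 : s₁ ≤ Real.sinh a := Real.sinh_le_sinh.2 ha.1
  have hsa2 : Real.sinh a ≤ s₂ := Real.sinh_le_sinh.2 ha.2
  have hsb : 0 ≤ Real.sinh b := Real.sinh_nonneg_iff.2 hb
  have h1 : Real.exp c ≤ 2 * Real.cosh c := by
    rw [Real.cosh_eq]; nlinarith [Real.exp_pos (-c)]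
  have h2 : 2 * Real.sinh b ≤ Real.exp b := by
    rw [Real.sinh_eq]; nlinarith [Real.exp_pos (-b)]
  have h4 : Real.exp b ≤ 2 * Real.sinh b + 1 := by
    rw [Real.sinh_eq]
    have : Real.exp (-b) ≤ 1 := Real.exp_le_one_iff.2 (by linarith)
    linarith
  have h5 : 2 * Real.cosh c ≤ 2 * Real.exp c := by
    rw [Real.cosh_eq]
    have : Real.exp (-c) ≤ Real.exp c := Real.exp_le_exp.2 (by linarith)
    linarith
  have hec1 : 1 ≤ Real.exp c := Real.one_le_exp hc0.le
  -- direction 1: c ≤ log s₂ + b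
  have h3 : Real.exp c ≤ s₂ * Real.exp b := by
    have : 2 * Real.cosh c ≤ 2 * (Real.sinh b * s₂) := by nlinarith
    nlinarith
  have hd1 : c ≤ Real.log s₂ + b := by
    have : Real.exp c ≤ Real.exp (Real.log s₂ + b) := by
      rw [Real.exp_add, Real.exp_log hs₂]; exact h3
    exact Real.exp_le_exp.1 this
  -- direction 2: b ≤ log ((2+s₁)/s₁) + c
  have h6 : s₁ * Real.exp b ≤ (2 + s₁) * Real.exp c := by nlinarith
  have hd2 : b ≤ Real.log ((2 + s₁) / s₁) + c := by
    have h7 : Real.exp b ≤ ((2 + s₁) / s₁) * Real.exp c := by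
      rw [div_mul_eq_mul_div, le_div_iff₀ hs₁]; nlinarith
    have : Real.exp b ≤ Real.exp (Real.log ((2 + s₁) / s₁) + c) := by
      rw [Real.exp_add, Real.exp_log (by positivity)]; exact h7
    exact Real.exp_le_exp.1 this
  have hl1 : Real.log s₂ ≤ Real.log M := by
    apply Real.log_le_log hs₂
    have : 0 < 2 / s₁ := by positivity
    simp only [hMdef]; linarith
  have hl2 : Real.log ((2 + s₁) / s₁) ≤ Real.log M := by
    apply Real.log_le_log (by positivity)
    rw [div_le_iff₀ hs₁, hMdef]
    have h2s : 2 / s₁ * s₁ = 2 := div_mul_cancel₀ 2 hs₁.ne'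
    nlinarith
  rw [abs_sub_le_iff]
  exact ⟨by linarith, by linarith⟩
end

section
/- Let 0 < ε ≤ ε₀ be real numbers. There exists a constant C ≥ 1, depending only on ε and ε₀, such that for every real a in [ε/4, ε₀/2], every real c ≥ ε/2 and every real b ≥ 0 satisfying cosh c = sinh b · sinh a, one has c/C ≤ b ≤ C · c. -/
set_option maxHeartbeats 1600000 in
/-- Conclusion of Case 2 of Lemma 3.3: there is `C ≥ 1` depending only on
`ε, ε₀` such that for `a ∈ [ε/4, ε₀/2]`, `c ≥ ε/2`, `b ≥ 0` with
`cosh c = sinh b * sinh a`, one has `c/C ≤ b ≤ C * c`. -/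
theorem case2_multiplicative_estimate (ε ε₀ : ℝ) (hε : 0 < ε) (hεε₀ : ε ≤ ε₀) :
    ∃ C : ℝ, 1 ≤ C ∧
      ∀ a c b : ℝ,
        a ∈ Set.Icc (ε / 4) (ε₀ / 2) →
        ε / 2 ≤ c → 0 ≤ b →
        Real.cosh c = Real.sinh b * Real.sinh a →
        c / C ≤ b ∧ b ≤ C * c := by
  set s₁ := Real.sinh (ε / 4) with hs₁def
  set s₂ := Real.sinh (ε₀ / 2) with hs₂def
  have hs₁ : 0 < s₁ := Real.sinh_pos_iff.mpr (by linarith)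
  have hs₂ : 0 < s₂ := Real.sinh_pos_iff.mpr (by linarith)
  set m := Real.arsinh (1 / s₂) with hmdef
  have hm : 0 < m := Real.arsinh_pos_iff.mpr (by positivity)
  set K₁ := Real.log (2 / s₁ + 1) with hK₁def
  have hK₁ : 0 ≤ K₁ := Real.log_nonneg (by nlinarith [div_pos (by norm_num : (0:ℝ) < 2) hs₁])
  set L := max (Real.log (2 * s₂)) 0 with hLdef
  have hL : 0 ≤ L := le_max_right _ _
  set C := max (max 2 (2 * L / m)) (1 + 2 * K₁ / ε) with hCdef
  have hC2 : (2 : ℝ) ≤ C := le_trans (le_max_left _ _) (le_max_left _ _)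
  have hCpos : 0 < C := by linarith
  refine ⟨C, by linarith, ?_⟩
  rintro a c b ⟨ha1, ha2⟩ hc hb heq
  have hcpos : 0 < c := by linarith
  have hsa1 : s₁ ≤ Real.sinh a := Real.sinh_le_sinh.mpr ha1
  have hsa2 : Real.sinh a ≤ s₂ := Real.sinh_le_sinh.mpr ha2
  have hsb : 0 ≤ Real.sinh b := Real.sinh_nonneg_iff.mpr hb
  have hcoshc : 1 ≤ Real.cosh c := Real.one_le_cosh c
  -- sinh b bounds
  have hub : Real.sinh b * s₁ ≤ Real.cosh c := by nlinarith
  have hlb : Real.cosh c ≤ Real.sinh b * s₂ := by nlinarith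
  -- exp comparisons
  have hexpcb : Real.exp c ≤ 2 * Real.cosh c := by
    have := Real.sinh_add_cosh c
    have h3 : Real.cosh c - Real.sinh c = Real.exp (-c) := Real.cosh_sub_sinh c
    have h4 : 0 < Real.exp (-c) := Real.exp_pos _
    linarith
  have hcoshle : Real.cosh c ≤ Real.exp c := by
    have := Real.sinh_add_cosh c
    have : 0 ≤ Real.sinh c := Real.sinh_nonneg_iff.mpr (le_of_lt hcpos)
    linarith [Real.sinh_add_cosh c]
  -- Upper bound on b
  have hupper : b ≤ C * c := by
    have h1 : Real.exp b ≤ 2 * Real.sinh b + 1 := by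
      have h2 := Real.sinh_add_cosh b
      have h3 : Real.cosh b - Real.sinh b = Real.exp (-b) := Real.cosh_sub_sinh b
      have h4 : Real.exp (-b) ≤ 1 := Real.exp_le_one_iff.mpr (by linarith)
      linarith
    have h5 : Real.sinh b ≤ Real.cosh c / s₁ := (le_div_iff₀ hs₁).mpr hub
    have h6 : Real.exp b ≤ Real.exp c * (2 / s₁ + 1) := by
      have : 2 * (Real.cosh c / s₁) + 1 ≤ Real.cosh c * (2 / s₁ + 1) := by
        rw [div_eq_mul_inv, div_eq_mul_inv]; nlinarith [inv_pos.mpr hs₁]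
      have h7 : Real.cosh c * (2 / s₁ + 1) ≤ Real.exp c * (2 / s₁ + 1) := by
        apply mul_le_mul_of_nonneg_right hcoshle
        positivity
      linarith
    have h8 : Real.exp b ≤ Real.exp (c + K₁) := by
      rw [Real.exp_add, hK₁def, Real.exp_log (by positivity)]
      exact h6
    have h9 : b ≤ c + K₁ := Real.exp_le_exp.mp h8
    have h10 : K₁ ≤ c * (2 * K₁ / ε) := by
      rw [div_eq_mul_inv]
      have : 1 ≤ 2 * c / ε := by rw [le_div_iff₀ hε]; linarith
      rw [div_eq_mul_inv] at this
      nlinarith [inv_pos.mpr hε]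
    have h11 : 1 + 2 * K₁ / ε ≤ C := le_max_right _ _
    have h12 : (1 + 2 * K₁ / ε) * c ≤ C * c := mul_le_mul_of_nonneg_right h11 (le_of_lt hcpos)
    have h13 : c + c * (2 * K₁ / ε) = (1 + 2 * K₁ / ε) * c := by ring
    linarith
  refine ⟨?_, hupper⟩
  -- Lower bound: b ≥ m and b ≥ c - L
  have hbm : m ≤ b := by
    have h1 : 1 / s₂ ≤ Real.sinh b := by
      rw [div_le_iff₀ hs₂]; linarith
    have := Real.arsinh_le_arsinh.mpr h1
    rwa [Real.arsinh_sinh] at this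
  have hbcL : c - L ≤ b := by
    have h1 : Real.exp c / (2 * s₂) ≤ Real.sinh b := by
      rw [div_le_iff₀ (by positivity)]; linarith
    have h2 : Real.sinh b ≤ Real.exp b := by
      have := Real.sinh_add_cosh b
      have := Real.cosh_pos (x := b)
      linarith
    have h3 : Real.exp (c - L) ≤ Real.exp b := by
      have hLlog : Real.log (2 * s₂) ≤ L := le_max_left _ _
      have h4 : Real.exp (c - L) ≤ Real.exp (c - Real.log (2 * s₂)) :=
        Real.exp_le_exp.mpr (by linarith)
      have h5 : Real.exp (c - Real.log (2 * s₂)) = Real.exp c / (2 * s₂) := by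
        rw [Real.exp_sub, Real.exp_log (by positivity)]
      linarith
    linarith [Real.exp_le_exp.mp h3]
  rcases le_or_gt (2 * L) c with hcase | hcase
  · -- c ≥ 2L : b ≥ c/2 ≥ c/C
    have : c / C ≤ c / 2 := div_le_div_of_nonneg_left (le_of_lt hcpos) (by norm_num) hC2
    linarith
  · -- c < 2L : c/C ≤ m ≤ b
    have h1 : 2 * L / m ≤ C := le_trans (le_max_right _ _) (le_max_left _ _)
    have h2 : 2 * L ≤ C * m := by
      rw [div_le_iff₀ hm] at h1; linarith
    have : c / C ≤ m := by
      rw [div_le_iff₀ hCpos]; linarith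
    linarith
end
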